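/- Let F : ℝ^d → ℝ be twice differentiable with L₂-Lipschitz Hessian. Fix x', x ∈ ℝ^d and K ∈ ℕ with K ≥ 1, and define the equispaced points x^{(k)} := x' + (k/K)(x − x') for k = 0, 1, …, K. Then ‖∇F(x) − ∇F(x') − Σ_{k=1}^K ∇²F(x^{(k−1)})(x^{(k)} − x^{(k−1)})‖ ≤ (L₂/(2K))·‖x − x'‖². -/

import Mathlib

/-
Telescope `∇F(x) - ∇F(x')` over the `K` sub-segments. On each sub-segment, of length
`‖x - x'‖ / K`, the second-order Taylor bound for a map with `L₂`-Lipschitz derivative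
makes the error of the Hessian step at most `(L₂/2)(‖x - x'‖/K)²`; summing `K` of them
gives `(L₂/(2K))‖x - x'‖²`.
-/

open Set

/-- The `k`-th of `K` equispaced points on the segment from `x'` to `x`:
`x^{(k)} = x' + (k/K)(x - x')`. -/
noncomputable def pt {d : ℕ} (x' x : EuclideanSpace ℝ (Fin d)) (K : ℕ) (k : ℕ) :
    EuclideanSpace ℝ (Fin d) :=
  x' + ((k : ℝ) / K) • (x - x')

section Taylor

variable {E F : Type*} [NormedAddCommGroup E] [NormedSpace ℝ E]
  [NormedAddCommGroup F] [NormedSpace ℝ F]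

theorem norm_image_one_le_of_norm_deriv_le_mul {φ φ' : ℝ → F} {C : ℝ} (h₀ : φ 0 = 0)
    (hφ : ∀ t ∈ Icc (0 : ℝ) 1, HasDerivAt φ (φ' t) t)
    (bound : ∀ t ∈ Icc (0 : ℝ) 1, ‖φ' t‖ ≤ C * t) :
    ‖φ 1‖ ≤ C / 2 := by
  have hB : ∀ t, HasDerivAt (fun t => C / 2 * t ^ 2) (C * t) t := fun t =>
    ((hasDerivAt_pow 2 t).const_mul (C / 2)).congr_deriv (by norm_num; ring)
  have := image_norm_le_of_norm_deriv_right_le_deriv_boundary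
    (fun t ht => (hφ t ht).continuousAt.continuousWithinAt)
    (fun t ht => (hφ t (Ico_subset_Icc_self ht)).hasDerivWithinAt)
    (by simp [h₀]) hB (fun t ht => bound t (Ico_subset_Icc_self ht))
    (right_mem_Icc.2 zero_le_one)
  simpa using this

theorem norm_image_sub_sub_fderiv_le {g : E → F} {g' : E → E →L[ℝ] F} {L : ℝ}
    (hg : ∀ z, HasFDerivAt g (g' z) z) (hlip : ∀ z w, ‖g' z - g' w‖ ≤ L * ‖z - w‖)
    (a b : E) :
    ‖g b - g a - g' a (b - a)‖ ≤ L / 2 * ‖b - a‖ ^ 2 := by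
  set v := b - a
  have hline : ∀ t : ℝ, HasDerivAt (fun t : ℝ => a + t • v) v t := fun t => by
    simpa using ((hasDerivAt_id t).smul_const v).const_add a
  have hderiv : ∀ t : ℝ, HasDerivAt (fun t : ℝ => g (a + t • v) - g a - t • g' a v)
      (g' (a + t • v) v - g' a v) t := fun t => by
    simpa using (((hg _).comp_hasDerivAt t (hline t)).sub_const (g a)).fun_sub
      ((hasDerivAt_id t).smul_const (g' a v))
  have bound : ∀ t ∈ Icc (0 : ℝ) 1, ‖g' (a + t • v) v - g' a v‖ ≤ L * ‖v‖ ^ 2 * t := by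
    rintro t ⟨ht, -⟩
    calc ‖g' (a + t • v) v - g' a v‖ ≤ ‖g' (a + t • v) - g' a‖ * ‖v‖ :=
          (g' (a + t • v) - g' a).le_opNorm v
      _ ≤ L * ‖t • v‖ * ‖v‖ := by
          gcongr
          simpa using hlip (a + t • v) a
      _ = L * ‖v‖ ^ 2 * t := by rw [norm_smul, Real.norm_of_nonneg ht]; ring
  have h := norm_image_one_le_of_norm_deriv_le_mul (by simp) (fun t _ => hderiv t) bound
  rw [one_smul, one_smul, add_sub_cancel] at h
  linarith

theorem norm_sub_sub_sum_fderiv_le {g : E → F} {g' : E → E →L[ℝ] F} {L : ℝ}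
    (hg : ∀ z, HasFDerivAt g (g' z) z) (hlip : ∀ z w, ‖g' z - g' w‖ ≤ L * ‖z - w‖)
    (p : ℕ → E) (K : ℕ) :
    ‖g (p K) - g (p 0) - ∑ k ∈ Finset.range K, g' (p k) (p (k + 1) - p k)‖ ≤
      ∑ k ∈ Finset.range K, L / 2 * ‖p (k + 1) - p k‖ ^ 2 := by
  rw [← Finset.sum_range_sub (fun k => g (p k)), ← Finset.sum_sub_distrib]
  exact (norm_sum_le _ _).trans
    (Finset.sum_le_sum fun k _ => norm_image_sub_sub_fderiv_le hg hlip _ _)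

end Taylor

section EquispacedPoints

variable {d : ℕ} (x' x : EuclideanSpace ℝ (Fin d)) {K : ℕ}

theorem pt_zero : pt x' x K 0 = x' := by simp [pt]

theorem pt_self (hK : K ≠ 0) : pt x' x K K = x := by simp [pt, hK]

theorem pt_succ_sub (k : ℕ) : pt x' x K (k + 1) - pt x' x K k = (K : ℝ)⁻¹ • (x - x') := by
  simp only [pt, add_sub_add_left_eq_sub, ← sub_smul]
  push_cast
  ring_nf

end EquispacedPoints

theorem stmt_17 {d : ℕ}
    (gradF : EuclideanSpace ℝ (Fin d) → EuclideanSpace ℝ (Fin d))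
    (hessF : EuclideanSpace ℝ (Fin d) →
      EuclideanSpace ℝ (Fin d) →L[ℝ] EuclideanSpace ℝ (Fin d))
    (L₂ : ℝ)
    (hhess : ∀ z, HasFDerivAt gradF (hessF z) z)
    (hlip : ∀ z w, ‖hessF z - hessF w‖ ≤ L₂ * ‖z - w‖)
    (x' x : EuclideanSpace ℝ (Fin d)) (K : ℕ) (hK : 1 ≤ K) :
    ‖gradF x - gradF x' -
        ∑ k ∈ Finset.range K,
          hessF (pt x' x K k) (pt x' x K (k + 1) - pt x' x K k)‖
      ≤ L₂ / (2 * K) * ‖x - x'‖ ^ 2 := by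
  have hK₀ : K ≠ 0 := Nat.one_le_iff_ne_zero.mp hK
  have h := norm_sub_sub_sum_fderiv_le hhess hlip (pt x' x K) K
  rw [pt_zero, pt_self x' x hK₀] at h
  refine h.trans_eq ?_
  simp only [pt_succ_sub, norm_smul, norm_inv, Real.norm_natCast, Finset.sum_const,
    Finset.card_range, nsmul_eq_mul]
  field_simp
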